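/- arXiv:1003.1224 — 4 statements merged into one kernel-verified Lean document; each statement's English description precedes it below -/
import Mathlib

section
/- Let u be a uniformly recurrent infinite word over a finite alphabet whose language contains infinitely many distinct palindromic factors. Then the language of u is closed under reversal, i.e., for every factor w of u, the reversal of w is also a factor of u. -/
open List

/-- The factor of `u` of length `n` starting at position `i`. -/
def word {A : Type*} (u : ℕ → A) (i n : ℕ) : List A :=
  (List.range n).map (fun j => u (i + j))

/-- `w` occurs in `u` at position `i`. -/
def OccursAt {A : Type*} (u : ℕ → A) (w : List A) (i : ℕ) : Prop :=
  w = word u i w.length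

/-- `w` is a factor of the infinite word `u`. -/
def IsFactor {A : Type*} (u : ℕ → A) (w : List A) : Prop :=
  ∃ i, OccursAt u w i

/-- Every letter of the alphabet occurs in `u`. -/
def AllLettersOccur {A : Type*} (u : ℕ → A) : Prop :=
  ∀ a : A, ∃ i, u i = a

/-- The language of `u` is closed under reversal. -/
def ClosedUnderReversal {A : Type*} (u : ℕ → A) : Prop :=
  ∀ w : List A, IsFactor u w → IsFactor u w.reverse

/-- `u` is uniformly recurrent: every factor occurs in every window of some
bounded length. -/
def UniformlyRecurrent {A : Type*} (u : ℕ → A) : Prop :=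
  ∀ w : List A, IsFactor u w → ∃ N : ℕ, ∀ i : ℕ, ∃ j : ℕ,
    i ≤ j ∧ j < i + N ∧ OccursAt u w j

/-- Factor complexity: the number of factors of `u` of length `n`. -/
noncomputable def complexity {A : Type*} (u : ℕ → A) (n : ℕ) : ℕ :=
  Set.ncard {w : List A | w.length = n ∧ IsFactor u w}

/-- Palindromic complexity: the number of palindromic factors of `u` of
length `n`. -/
noncomputable def palComplexity {A : Type*} (u : ℕ → A) (n : ℕ) : ℕ :=
  Set.ncard {w : List A | w.length = n ∧ IsFactor u w ∧ w.reverse = w}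

/-- The number of distinct palindromic factors of a finite word
(the empty word included). -/
noncomputable def palCount {A : Type*} (w : List A) : ℕ :=
  Set.ncard {v : List A | v <:+: w ∧ v.reverse = v}

/-- `u` is rich in palindromes. -/
def Rich {A : Type*} (u : ℕ → A) : Prop :=
  ∀ w : List A, IsFactor u w → palCount w = w.length + 1

/-- `j < k` are two successive occurrences of `w` in `u`. -/
def SuccOccurrences {A : Type*} (u : ℕ → A) (w : List A) (j k : ℕ) : Prop :=
  OccursAt u w j ∧ OccursAt u w k ∧ j < k ∧
    ∀ l : ℕ, j < l → l < k → ¬ OccursAt u w l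

/-- The set of return words of the factor `w` in `u`. -/
def returnWords {A : Type*} (u : ℕ → A) (w : List A) : Set (List A) :=
  {v | ∃ j k : ℕ, SuccOccurrences u w j k ∧ v = word u j (k - j)}

/-- Left extensions of `w` in `u`. -/
def Lext {A : Type*} (u : ℕ → A) (w : List A) : Set A :=
  {a | IsFactor u (a :: w)}

/-- Right extensions of `w` in `u`. -/
def Rext {A : Type*} (u : ℕ → A) (w : List A) : Set A :=
  {b | IsFactor u (w ++ [b])}

/-- Bilateral extensions of `w` in `u`. -/
def Bext {A : Type*} (u : ℕ → A) (w : List A) : Set (A × A) :=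
  {p | IsFactor u (p.1 :: (w ++ [p.2]))}

/-- Palindromic extensions of a (palindromic) factor `w` of `u`. -/
def Pext {A : Type*} (u : ℕ → A) (w : List A) : Set (List A) :=
  {v | ∃ a : A, v = a :: (w ++ [a]) ∧ IsFactor u v}

/-- `w` is a bispecial factor of `u`. -/
def Bispecial {A : Type*} (u : ℕ → A) (w : List A) : Prop :=
  IsFactor u w ∧ 2 ≤ Set.ncard (Lext u w) ∧ 2 ≤ Set.ncard (Rext u w)

/-- The bilateral order of a factor `w` of `u`. -/
noncomputable def bilateralOrder {A : Type*} (u : ℕ → A) (w : List A) : ℤ :=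
  (Set.ncard (Bext u w) : ℤ) - Set.ncard (Rext u w) - Set.ncard (Lext u w) + 1

/-- `u` is eventually periodic. -/
def EventuallyPeriodic {A : Type*} (u : ℕ → A) : Prop :=
  ∃ p : ℕ, 0 < p ∧ ∃ N : ℕ, ∀ n : ℕ, N ≤ n → u (n + p) = u n

/-- `u` is aperiodic. -/
def Aperiodic {A : Type*} (u : ℕ → A) : Prop :=
  ¬ EventuallyPeriodic u

/-- `u` is (1-)balanced. -/
def IsBalanced {A : Type*} [DecidableEq A] (u : ℕ → A) : Prop :=
  ∀ a : A, ∀ w v : List A, IsFactor u w → IsFactor u v → w.length = v.length →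
    |(w.count a : ℤ) - (v.count a : ℤ)| ≤ 1


@[simp] lemma word_length {A : Type*} (u : ℕ → A) (i n : ℕ) :
    (word u i n).length = n := by simp [word]

lemma word_append {A : Type*} (u : ℕ → A) (i a b : ℕ) :
    word u i (a + b) = word u i a ++ word u (i + a) b := by
  simp [word, List.range_add, Function.comp, add_assoc]

lemma factor_of_infix {A : Type*} {u : ℕ → A} {w v : List A}
    (h : w <:+: v) (hv : IsFactor u v) : IsFactor u w := by
  obtain ⟨s, t, rfl⟩ := h
  obtain ⟨i, hi⟩ := hv
  refine ⟨i + s.length, ?_⟩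
  unfold OccursAt at hi ⊢
  apply List.ext_getElem (by simp)
  intro j hj hj'
  have key := List.getElem_of_eq hi (show s.length + j < (s ++ w ++ t).length by simp; omega)
  simp [word, List.getElem_append, hj] at key
  simpa [word, add_assoc] using key

/-- A uniformly recurrent infinite word with infinitely many
palindromic factors has a language closed under reversal. -/
theorem stmt0 {A : Type*} [Fintype A] (u : ℕ → A)
    (hall : AllLettersOccur u)
    (hur : UniformlyRecurrent u)
    (hpal : {w : List A | IsFactor u w ∧ w.reverse = w}.Infinite) :
    ClosedUnderReversal u := by
  intro w hwf
  obtain ⟨N, hN⟩ := hur w hwf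
  have hfin := List.finite_length_lt A (N + w.length)
  obtain ⟨p, ⟨hpf, hpp⟩, hplen⟩ := (hpal.diff hfin).nonempty
  simp only [Set.mem_setOf_eq, not_lt] at hplen
  obtain ⟨i, hpi⟩ := hpf
  obtain ⟨j, hij, hjN, hwj⟩ := hN i
  have hij' : i + (j - i) = j := by omega
  obtain ⟨c, hc⟩ : ∃ c, p.length = (j - i) + (w.length + c) :=
    ⟨p.length - (j - i) - w.length, by omega⟩
  have hinf : w <:+: p := by
    refine ⟨word u i (j - i), word u (j + w.length) c, ?_⟩
    have hp2 : p = word u i ((j - i) + (w.length + c)) := by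
      conv_lhs => rw [hpi]
      rw [hc]
    rw [hp2, word_append, word_append, hij', ← hwj, List.append_assoc]
  have hrev : w.reverse <:+: p := by
    conv_rhs => rw [← hpp]
    exact List.reverse_infix.mpr hinf
  exact factor_of_infix hrev ⟨i, hpi⟩
end

section
/- Every finite word w contains at most |w| + 1 distinct palindromic factors, where the empty word counts as a palindromic factor. -/
open List

/-!
Reading `w` letter by letter, appending a letter `a` creates at most one new palindromic
factor, namely the longest palindromic suffix `L` of `w ++ [a]`. Indeed, a shorter palindromic
suffix `v` is a suffix of `L`, hence by symmetry a proper prefix of `L`, so it already occurs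
in `w`.
-/

namespace List

variable {α : Type*}

def palFactors (w : List α) : Set (List α) :=
  {v | v <:+: w ∧ v.reverse = v}

lemma palCount_eq_ncard_palFactors (w : List α) : palCount w = (palFactors w).ncard := rfl

lemma palFactors_finite (w : List α) : (palFactors w).Finite :=
  w.sublists'.finite_toSet.subset fun _ hv => mem_sublists'.mpr hv.1.sublist

lemma palFactors_nil : palFactors ([] : List α) = {[]} := by
  ext v
  simp +contextual [palFactors, infix_nil]

lemma IsSuffix.isPrefix_of_reverse_eq {v L : List α} (h : v <:+ L) (hv : v.reverse = v)
    (hL : L.reverse = L) : v <+: L := by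
  rw [← hv, ← hL] at h
  exact reverse_suffix.mp h

lemma exists_longest_palindromic_suffix (w : List α) :
    ∃ L, L <:+ w ∧ L.reverse = L ∧
      ∀ v, v <:+ w → v.reverse = v → v.length ≤ L.length := by
  have hfin : {v : List α | v <:+ w ∧ v.reverse = v}.Finite :=
    (palFactors_finite w).subset fun _ hv => ⟨hv.1.isInfix, hv.2⟩
  obtain ⟨L, ⟨hLw, hL⟩, hmax⟩ :=
    hfin.exists_maximalFor length _ ⟨[], nil_suffix, rfl⟩
  refine ⟨L, hLw, hL, fun v hvw hv => ?_⟩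
  by_contra! hlt
  exact hlt.not_ge (hmax ⟨hvw, hv⟩ hlt.le)

lemma exists_palFactors_append_singleton_subset_insert (w : List α) (a : α) :
    ∃ L, palFactors (w ++ [a]) ⊆ insert L (palFactors w) := by
  obtain ⟨L, hLw, hL, hmax⟩ := exists_longest_palindromic_suffix (w ++ [a])
  refine ⟨L, fun v ⟨hvw, hv⟩ => ?_⟩
  rcases infix_concat_iff.mp hvw with hsuf | hinf
  · rcases eq_or_ne v L with rfl | hvL
    · exact Set.mem_insert v _
    have hvpre : v <+: L :=
      (suffix_of_suffix_length_le hsuf hLw (hmax v hsuf hv)).isPrefix_of_reverse_eq hv hL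
    obtain rfl | ⟨t, rfl, htw⟩ := suffix_concat_iff.mp hLw
    · exact absurd (prefix_nil.mp hvpre) hvL
    have hvt : v <+: t := (prefix_concat_iff.mp hvpre).resolve_left hvL
    exact Set.mem_insert_of_mem _ ⟨hvt.isInfix.trans htw.isInfix, hv⟩
  · exact Set.mem_insert_of_mem _ ⟨hinf, hv⟩

lemma palCount_append_singleton_le (w : List α) (a : α) :
    palCount (w ++ [a]) ≤ palCount w + 1 := by
  obtain ⟨L, hsub⟩ := exists_palFactors_append_singleton_subset_insert w a
  simp only [palCount_eq_ncard_palFactors]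
  calc (palFactors (w ++ [a])).ncard
      ≤ (insert L (palFactors w)).ncard :=
        Set.ncard_le_ncard hsub ((palFactors_finite w).insert L)
    _ ≤ (palFactors w).ncard + 1 := Set.ncard_insert_le _ _

end List

/-- Every finite word `w` contains at most `|w| + 1` distinct
palindromic factors (the empty word included). -/
theorem stmt2 {A : Type*} (w : List A) :
    palCount w ≤ w.length + 1 := by
  induction w using List.reverseRecOn with
  | nil => simp [palCount_eq_ncard_palFactors, palFactors_nil]
  | append_singleton w a ih =>
    calc palCount (w ++ [a]) ≤ palCount w + 1 := palCount_append_singleton_le w a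
      _ ≤ (w ++ [a]).length + 1 := by simpa using ih
end

section
/- Let u be an infinite word over a finite alphabet whose language is closed under reversal. Then u is rich in palindromes if and only if P(n+1) + P(n) = C(n+1) − C(n) + 2 for all n ∈ ℕ. -/
open List

/-!
Call `p` fresh for length `n` if neither `word u p n` nor its reversal occurs before `p`. Fresh
positions represent the reversal classes of factors, so closure under reversal gives
`C n + P n = 2 F n` and `C (n + 1) - P (n + 1) = 2 G n`, where `F n` counts the fresh positions of
length `n` and `G n` those of length `n + 1` carrying a non-palindrome. If `m + 1` is fresh for
`n`, then `m` is fresh and non-palindromic for `n + 1`; hence the equation at `n` says exactly that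
every such `m` arises in this way.

In a rich word the longest palindromic suffix of every prefix is unioccurrent. If `u` is rich and
some fresh non-palindromic `m` were not followed by a fresh position, the factor running from the
last earlier occurrence of the class of `word u (m + 1) n` through the one at `m + 1` would be a
complete return word to that class, hence a palindrome, contradicting the freshness of `m`.
Conversely, a word that is not rich has a palindrome `s` with a non-palindromic complete return
word; starting from the fresh position of that return word, the shifts walk to the second
occurrence of `s` and make it fresh, although `s` already occurs at the start.
-/

lemma Nat.exists_last_lt {P : ℕ → Prop} {q k : ℕ} (hq : q < k) (hP : P q) :
    ∃ i, q ≤ i ∧ i < k ∧ P i ∧ ∀ l, i < l → l < k → ¬ P l := by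
  classical
  have hle := Nat.findGreatest_le (P := P) (k - 1)
  exact ⟨Nat.findGreatest P (k - 1), Nat.le_findGreatest (by omega) hP, by omega,
    Nat.findGreatest_spec (by omega) hP,
    fun l h1 h2 => Nat.findGreatest_is_greatest h1 (by omega)⟩

section Palindromes

variable {A : Type*}

noncomputable def longestPalSuffix (x : List A) : List A :=
  x.drop (sInf {j | (x.drop j).reverse = x.drop j ∧ x.drop j ≠ []})

lemma longestPalSuffix_suffix (x : List A) : longestPalSuffix x <:+ x :=
  List.drop_suffix _ _

lemma longestPalSuffix_spec {x : List A} (hx : x ≠ []) :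
    (longestPalSuffix x).reverse = longestPalSuffix x ∧ longestPalSuffix x ≠ [] := by
  refine Nat.sInf_mem (s := {j | (x.drop j).reverse = x.drop j ∧ x.drop j ≠ []})
    ⟨x.length - 1, ?_⟩
  obtain ⟨a, ha⟩ : ∃ a, x.drop (x.length - 1) = [a] :=
    List.length_eq_one_iff.mp <| by
      have := List.length_pos_iff.mpr hx
      simp only [List.length_drop]
      omega
  simpa [ha] using List.length_pos_iff.mpr hx

lemma length_le_longestPalSuffix {x v : List A} (hv : v <:+ x) (hpal : v.reverse = v)
    (hne : v ≠ []) : v.length ≤ (longestPalSuffix x).length := by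
  obtain ⟨t, rfl⟩ := hv
  have hmem : t.length ∈
      {j | ((t ++ v).drop j).reverse = (t ++ v).drop j ∧ (t ++ v).drop j ≠ []} := by
    simpa [List.length_pos_iff] using ⟨hpal, hne⟩
  have := Nat.sInf_le hmem
  simp only [longestPalSuffix, List.length_drop, List.length_append] at this ⊢
  omega

def palInfixes (w : List A) : Set (List A) := {v | v <:+: w ∧ v.reverse = v}

lemma palCount_eq_ncard (w : List A) : palCount w = (palInfixes w).ncard := rfl

lemma palInfixes_finite (w : List A) : (palInfixes w).Finite :=
  w.sublists.finite_toSet.subset fun _ hv => List.mem_sublists.mpr hv.1.sublist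

lemma palInfixes_nil : palInfixes ([] : List A) = {[]} := by
  ext v
  simp only [palInfixes, List.infix_nil, Set.mem_ofPred_eq, Set.mem_singleton_iff]
  exact ⟨And.left, fun h => ⟨h, h ▸ rfl⟩⟩

/-- Every palindromic suffix of `y ++ [a]` other than the longest one is a prefix of it,
hence already occurs in `y`. -/
lemma palInfixes_append_singleton (y : List A) (a : A) :
    palInfixes (y ++ [a]) = insert (longestPalSuffix (y ++ [a])) (palInfixes y) := by
  obtain ⟨hspal, hsne⟩ := longestPalSuffix_spec (x := y ++ [a]) (by simp)
  ext v
  simp only [palInfixes, Set.mem_insert_iff, Set.mem_ofPred_eq, List.infix_concat_iff]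
  constructor
  · rintro ⟨hsuf | hinf, hpal⟩
    · rcases eq_or_ne v [] with rfl | hne
      · exact Or.inr ⟨List.nil_infix, rfl⟩
      rcases eq_or_ne v (longestPalSuffix (y ++ [a])) with hvs | hvs
      · exact Or.inl hvs
      have hvs' : v <:+ longestPalSuffix (y ++ [a]) := List.suffix_of_suffix_length_le hsuf
        (longestPalSuffix_suffix _) (length_le_longestPalSuffix hsuf hpal hne)
      obtain ⟨t, hst, ht⟩ :=
        (List.suffix_concat_iff.mp (longestPalSuffix_suffix (y ++ [a]))).resolve_left hsne
      have hpre : v <+: t ++ [a] := by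
        rw [← hst, ← List.reverse_suffix, hpal, hspal]; exact hvs'
      rw [hst] at hvs
      refine Or.inr ⟨?_, hpal⟩
      exact ((List.prefix_concat_iff.mp hpre).resolve_left hvs).isInfix.trans ht.isInfix
    · exact Or.inr ⟨hinf, hpal⟩
  · rintro (rfl | ⟨hinf, hpal⟩)
    · exact ⟨Or.inl (longestPalSuffix_suffix _), hspal⟩
    · exact ⟨Or.inr hinf, hpal⟩

lemma palCount_append_singleton_of_infix {y : List A} {a : A}
    (h : longestPalSuffix (y ++ [a]) <:+: y) : palCount (y ++ [a]) = palCount y := by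
  rw [palCount_eq_ncard, palInfixes_append_singleton, Set.insert_eq_of_mem]
  · rfl
  · exact ⟨h, (longestPalSuffix_spec (by simp)).1⟩

lemma palCount_append_singleton_of_not_infix {y : List A} {a : A}
    (h : ¬ longestPalSuffix (y ++ [a]) <:+: y) : palCount (y ++ [a]) = palCount y + 1 := by
  rw [palCount_eq_ncard, palInfixes_append_singleton,
    Set.ncard_insert_of_notMem (fun hm => h hm.1) (palInfixes_finite y)]
  rfl

lemma palCount_le (w : List A) : palCount w ≤ w.length + 1 := by
  induction w using List.reverseRecOn with
  | nil => simp [palCount_eq_ncard, palInfixes_nil]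
  | append_singleton y a ih =>
    by_cases h : longestPalSuffix (y ++ [a]) <:+: y
    · rw [palCount_append_singleton_of_infix h, List.length_append]; omega
    · rw [palCount_append_singleton_of_not_infix h]; simpa using ih

def List.IsRich (w : List A) : Prop := palCount w = w.length + 1

lemma List.isRich_nil : ([] : List A).IsRich := by
  simp [List.IsRich, palCount_eq_ncard, palInfixes_nil]

lemma List.isRich_append_singleton_iff {y : List A} {a : A} :
    (y ++ [a]).IsRich ↔ y.IsRich ∧ ¬ longestPalSuffix (y ++ [a]) <:+: y := by
  have := palCount_le y
  by_cases h : longestPalSuffix (y ++ [a]) <:+: y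
  · simp only [List.IsRich, palCount_append_singleton_of_infix h, List.length_append,
      List.length_singleton, h, not_true_eq_false, and_false, iff_false]
    omega
  · simp only [List.IsRich, palCount_append_singleton_of_not_infix h, List.length_append,
      List.length_singleton, h, not_false_eq_true, and_true]
    omega

def EqUpToReversal (v w : List A) : Prop := v = w ∨ v = w.reverse

lemma EqUpToReversal.refl (w : List A) : EqUpToReversal w w := Or.inl rfl

lemma EqUpToReversal.symm {v w : List A} (h : EqUpToReversal v w) : EqUpToReversal w v := by
  rcases h with rfl | rfl
  · exact .refl _
  · exact Or.inr (List.reverse_reverse _).symm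

lemma EqUpToReversal.trans {v w x : List A} (h₁ : EqUpToReversal v w)
    (h₂ : EqUpToReversal w x) : EqUpToReversal v x := by
  rcases h₁ with rfl | rfl <;> rcases h₂ with rfl | rfl <;> simp [EqUpToReversal]

lemma eqUpToReversal_iff_of_reverse_eq {v w : List A} (hw : w.reverse = w) :
    EqUpToReversal v w ↔ v = w := by
  simp [EqUpToReversal, hw]

end Palindromes

section Words

variable {A : Type*} (u : ℕ → A)

@[simp] lemma length_word (i n : ℕ) : (word u i n).length = n := by
  simp [word]

@[simp] lemma getElem_word (i n j : ℕ) (hj : j < (word u i n).length) :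
    (word u i n)[j] = u (i + j) := by
  simp [word]

lemma isFactor_word (i n : ℕ) : IsFactor u (word u i n) :=
  ⟨i, by simp [OccursAt]⟩

lemma word_drop (i n o : ℕ) : (word u i n).drop o = word u (i + o) (n - o) :=
  List.ext_getElem (by simp) fun j _ _ => by simp [Nat.add_assoc]

lemma word_take (i : ℕ) {m n : ℕ} (h : m ≤ n) : (word u i n).take m = word u i m :=
  List.ext_getElem (by simp; omega) fun j _ _ => by simp

lemma word_add (i m n : ℕ) : word u i (m + n) = word u i m ++ word u (i + m) n := by
  rw [← List.take_append_drop m (word u i (m + n)), word_take u i (by omega), word_drop]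
  simp

lemma word_add_one (i n : ℕ) : word u i (n + 1) = word u i n ++ [u (i + n)] := by
  rw [word_add]
  simp [word]

variable {u}

lemma eq_word_of_suffix_word {v : List A} {i n : ℕ} (h : v <:+ word u i n) :
    v = word u (i + (n - v.length)) v.length := by
  have hl : v.length ≤ n := by simpa using h.length_le
  conv_lhs => rw [List.suffix_iff_eq_drop.mp h, word_drop]
  simp only [length_word]
  congr 1
  omega

lemma exists_word_eq_of_infix_word {v : List A} {i n : ℕ} (h : v <:+: word u i n) :
    ∃ o, o + v.length ≤ n ∧ word u (i + o) v.length = v := by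
  obtain ⟨t, hvt, htw⟩ := List.infix_iff_prefix_suffix.mp h
  have hlen := hvt.length_le
  have ht := eq_word_of_suffix_word htw
  have htn : t.length ≤ n := by simpa using htw.length_le
  refine ⟨n - t.length, by omega, ?_⟩
  calc word u (i + (n - t.length)) v.length
      = (word u (i + (n - t.length)) t.length).take v.length := (word_take u _ hlen).symm
    _ = v := by rw [← ht]; exact (List.prefix_iff_eq_take.mp hvt).symm

lemma word_suffix_word {i j m n : ℕ} (hij : i ≤ j) (h : j + m = i + n) :
    word u j m <:+ word u i n := by
  obtain rfl : n = (j - i) + m := by omega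
  rw [word_add, Nat.add_sub_cancel' hij]
  exact List.suffix_append _ _

lemma word_infix_word {i j m n : ℕ} (hij : i ≤ j) (h : j + m ≤ i + n) :
    word u j m <:+: word u i n := by
  obtain ⟨r, rfl⟩ : ∃ r, n = (j + m - i) + r := ⟨n - (j + m - i), by omega⟩
  rw [word_add]
  exact (word_suffix_word (n := j + m - i) hij (by omega)).isInfix.trans
    (List.prefix_append _ _).isInfix

lemma apply_eq_of_word_eq {a b L j : ℕ} (h : word u a L = word u b L) (hj : j < L) :
    u (a + j) = u (b + j) := by
  simpa [word, hj] using congrArg (·[j]?) h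

lemma apply_eq_of_word_eq_reverse {a b L j : ℕ} (h : word u a L = (word u b L).reverse)
    (hj : j < L) : u (a + j) = u (b + (L - 1 - j)) := by
  simpa [List.getElem?_reverse, hj, word, List.getElem?_range] using congrArg (·[j]?) h

lemma word_add_eq_of_word_eq {a b L o k : ℕ} (h : word u a L = word u b L) (hok : o + k ≤ L) :
    word u (a + o) k = word u (b + o) k :=
  List.ext_getElem (by simp) fun j hj _ => by
    simpa [Nat.add_assoc] using apply_eq_of_word_eq h (j := o + j) (by simp at hj; omega)

lemma word_add_eq_reverse_of_word_eq_reverse {a b L o k : ℕ}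
    (h : word u a L = (word u b L).reverse) (hok : o + k ≤ L) :
    word u (a + o) k = (word u (b + (L - o - k)) k).reverse :=
  List.ext_getElem (by simp) fun j hj _ => by
    simp only [length_word] at hj
    rw [getElem_word, List.getElem_reverse, getElem_word, Nat.add_assoc,
      apply_eq_of_word_eq_reverse h (by omega)]
    congr 1
    simp
    omega

end Words

section Richness

variable {A : Type*}

variable {u : ℕ → A}

lemma word_ne_longestPalSuffix {i n o : ℕ} (h : (word u i (n + 1)).IsRich)
    (ho : o + (longestPalSuffix (word u i (n + 1))).length ≤ n) :
    word u (i + o) (longestPalSuffix (word u i (n + 1))).length ≠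
      longestPalSuffix (word u i (n + 1)) := by
  intro heq
  rw [word_add_one u i n] at h heq ho
  exact (List.isRich_append_singleton_iff.mp h).2 (heq ▸ word_infix_word (by omega) (by omega))

/-- The longest palindromic suffix `s` of a rich word occurs in it only once. If `s` were not the
whole word, it would reappear inside the first block, or its reversed prefix would be an interior
occurrence of the last block `word u (i + d) n` up to reversal. -/
lemma reverse_word_eq_of_isRich {i n d : ℕ} (hd : 0 < d) (hrich : (word u i (n + d)).IsRich)
    (hstart : EqUpToReversal (word u i n) (word u (i + d) n))
    (hmid : ∀ o, 0 < o → o < d → ¬ EqUpToReversal (word u (i + o) n) (word u (i + d) n)) :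
    (word u i (n + d)).reverse = word u i (n + d) := by
  obtain ⟨N, hN⟩ : ∃ N, n + d = N + 1 := ⟨n + d - 1, by omega⟩
  rw [hN] at hrich ⊢
  have hsuf := longestPalSuffix_suffix (word u i (N + 1))
  obtain ⟨hspal, -⟩ := longestPalSuffix_spec (x := word u i (N + 1))
    (List.ne_nil_of_length_pos (by simp))
  set s := longestPalSuffix (word u i (N + 1))
  have hsword : s = word u (i + (N + 1 - s.length)) s.length := eq_word_of_suffix_word hsuf
  have hsl : s.length ≤ N + 1 := by simpa using hsuf.length_le
  have huniq : ∀ o, o + s.length ≤ N → word u (i + o) s.length ≠ s :=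
    fun o ho => word_ne_longestPalSuffix hrich ho
  rcases lt_or_ge s.length n with hlt | hge
  · exfalso
    rcases hstart with h | h
    · apply huniq (n - s.length) (by omega)
      rw [word_add_eq_of_word_eq h (by omega)]
      conv_rhs => rw [hsword]
      congr 1
      omega
    · apply huniq 0 (by omega)
      rw [word_add_eq_reverse_of_word_eq_reverse h (by omega),
        show i + d + (n - 0 - s.length) = i + (N + 1 - s.length) by omega, ← hsword, hspal]
  rcases eq_or_lt_of_le hsl with heq | hlt
  · rw [heq, Nat.sub_self, add_zero] at hsword
    rwa [← hsword]
  · set o := N + 1 - s.length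
    have hpal : word u (i + o) s.length = (word u (i + o) s.length).reverse := by
      rw [← hsword, hspal]
    have hfirst : word u (i + o) n = (word u (i + d) n).reverse := by
      have := word_add_eq_reverse_of_word_eq_reverse hpal (o := 0) (k := n) (by omega)
      rwa [add_zero, show i + o + (s.length - 0 - n) = i + d by omega] at this
    exfalso
    rcases lt_or_eq_of_le (show o ≤ d by omega) with hod | hod
    · exact hmid o (by omega) hod (Or.inr hfirst)
    · have hv : word u (i + d) n = s := by
        rw [hsword]
        congr 1 <;> omega
      rw [hv, eqUpToReversal_iff_of_reverse_eq hspal] at hstart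
      exact huniq 0 (by omega) (by rwa [add_zero, show s.length = n by omega])

/-- `word u i (s.length + d)` is a complete return word of `s`. -/
def IsCompleteReturn (u : ℕ → A) (s : List A) (i d : ℕ) : Prop :=
  0 < d ∧ word u i s.length = s ∧ word u (i + d) s.length = s ∧
    ∀ o, 0 < o → o < d → word u (i + o) s.length ≠ s

lemma IsCompleteReturn.of_eqUpToReversal {s : List A} (hs : s.reverse = s) {i d p : ℕ}
    (h : IsCompleteReturn u s i d)
    (hp : EqUpToReversal (word u p (s.length + d)) (word u i (s.length + d))) :
    IsCompleteReturn u s p d := by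
  obtain ⟨hd, hstart, hend, hmid⟩ := h
  rcases hp with hp | hp
  · have shift : ∀ o ≤ d, word u (p + o) s.length = word u (i + o) s.length :=
      fun o ho => word_add_eq_of_word_eq hp (by omega)
    refine ⟨hd, ?_, by rw [shift d le_rfl, hend], fun o h1 h2 => ?_⟩
    · simpa [hstart] using shift 0 (Nat.zero_le d)
    · rw [shift o h2.le]; exact hmid o h1 h2
  · have shift : ∀ o ≤ d,
        word u (p + o) s.length = (word u (i + (d - o)) s.length).reverse := by
      intro o ho
      rw [word_add_eq_reverse_of_word_eq_reverse hp (by omega),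
        show s.length + d - o - s.length = d - o by omega]
    refine ⟨hd, ?_, ?_, fun o h1 h2 hc => ?_⟩
    · simpa [hend, hs] using shift 0 (Nat.zero_le d)
    · simpa [hstart, hs] using shift d le_rfl
    · rw [shift o h2.le, List.reverse_eq_iff, hs] at hc
      exact hmid (d - o) (by omega) (by omega) hc

lemma exists_longestPalSuffix_infix_of_not_rich (h : ¬ Rich u) :
    ∃ p N, longestPalSuffix (word u p (N + 1)) <:+: word u p N := by
  classical
  obtain ⟨w, ⟨p, hp⟩, hw⟩ : ∃ w, IsFactor u w ∧ ¬ w.IsRich := by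
    simpa [Rich, List.IsRich] using h
  have hex : ∃ M, ¬ (word u p M).IsRich := ⟨w.length, hp ▸ hw⟩
  obtain ⟨N, hN⟩ : ∃ N, Nat.find hex = N + 1 := Nat.exists_eq_add_one.mpr <|
    Nat.pos_of_ne_zero fun h0 => Nat.find_spec hex (by rw [h0]; exact List.isRich_nil)
  have hnot : ¬ (word u p N ++ [u (p + N)]).IsRich := by
    rw [← word_add_one, ← hN]
    exact Nat.find_spec hex
  have hprev : (word u p N).IsRich := not_not.mp (Nat.find_min hex (by omega))
  refine ⟨p, N, not_not.mp fun hc => hnot ?_⟩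
  rw [word_add_one] at hc
  exact List.isRich_append_singleton_iff.mpr ⟨hprev, hc⟩

lemma exists_isCompleteReturn_of_not_rich (h : ¬ Rich u) :
    ∃ s i d, s.reverse = s ∧ IsCompleteReturn u s i d ∧
      (word u i (s.length + d)).reverse ≠ word u i (s.length + d) := by
  obtain ⟨p, N, hinf⟩ := exists_longestPalSuffix_infix_of_not_rich h
  have hsuf := longestPalSuffix_suffix (word u p (N + 1))
  obtain ⟨hspal, hsne⟩ := longestPalSuffix_spec (x := word u p (N + 1))
    (List.ne_nil_of_length_pos (by simp))
  set s := longestPalSuffix (word u p (N + 1))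
  have hsl : s.length ≤ N + 1 := by simpa using hsuf.length_le
  have hsl0 : 0 < s.length := List.length_pos_iff.mpr hsne
  obtain ⟨o, ho, hos⟩ := exists_word_eq_of_infix_word hinf
  set k := p + (N + 1 - s.length)
  obtain ⟨i, hpi, hik, his, hlast⟩ :=
    Nat.exists_last_lt (P := fun l => word u l s.length = s) (k := k) (by omega) hos
  refine ⟨s, i, k - i, hspal,
    ⟨by omega, his, ?_, fun o' h1 h2 => hlast _ (by omega) (by omega)⟩, ?_⟩
  · rw [Nat.add_sub_cancel' hik.le]
    exact (eq_word_of_suffix_word hsuf).symm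
  · intro hpal
    have := length_le_longestPalSuffix (word_suffix_word (n := N + 1) (j := i) (i := p)
      (by omega) (by omega)) hpal (List.ne_nil_of_length_pos (by simp; omega))
    have hle : s.length + (k - i) ≤ s.length := by simpa only [length_word] using this
    omega

end Richness

section FreshPositions

variable {A : Type*} {u : ℕ → A}

def IsFresh (u : ℕ → A) (n p : ℕ) : Prop :=
  ∀ q < p, ¬ EqUpToReversal (word u q n) (word u p n)

lemma isFresh_zero (u : ℕ → A) (n : ℕ) : IsFresh u n 0 :=
  fun _ h => absurd h (Nat.not_lt_zero _)

lemma IsFresh.eq {n p q : ℕ} (hp : IsFresh u n p) (hq : IsFresh u n q)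
    (h : EqUpToReversal (word u p n) (word u q n)) : p = q := by
  rcases lt_trichotomy p q with hpq | rfl | hqp
  · exact absurd h (hq p hpq)
  · rfl
  · exact absurd h.symm (hp q hqp)

lemma exists_isFresh {w : List A} (hw : IsFactor u w) :
    ∃ p, IsFresh u w.length p ∧ EqUpToReversal (word u p w.length) w := by
  classical
  have hex : ∃ p, EqUpToReversal (word u p w.length) w := by
    obtain ⟨i, hi⟩ := hw
    exact ⟨i, Or.inl hi.symm⟩
  exact ⟨Nat.find hex, fun q hq hc => Nat.find_min hex hq (hc.trans (Nat.find_spec hex)),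
    Nat.find_spec hex⟩

lemma IsFresh.of_add_one {n m : ℕ} (h : IsFresh u n (m + 1)) :
    IsFresh u (n + 1) m ∧ (word u m (n + 1)).reverse ≠ word u m (n + 1) := by
  refine ⟨fun q hq hc => ?_, fun hpal => ?_⟩
  · rcases hc with hc | hc
    · exact h (q + 1) (by omega) (Or.inl (word_add_eq_of_word_eq (o := 1) hc (by omega)))
    · have := word_add_eq_reverse_of_word_eq_reverse (o := 0) (k := n) hc (by omega)
      exact h q (by omega) (Or.inr (by simpa using this))
  · have := word_add_eq_reverse_of_word_eq_reverse (o := 0) (k := n) hpal.symm (by omega)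
    exact h m (by omega) (Or.inr (by simpa using this))

lemma injOn_word_isFresh (n : ℕ) : Set.InjOn (word u · n) {p | IsFresh u n p} :=
  fun _ hp _ hq h => hp.eq hq (Or.inl h)

lemma injOn_reverse_word_isFresh (n : ℕ) :
    Set.InjOn (fun p => (word u p n).reverse) {p | IsFresh u n p} :=
  fun _ hp _ hq h => hp.eq hq (Or.inl (List.reverse_injective h))

def FreshShifts (u : ℕ → A) (n : ℕ) : Prop :=
  ∀ m, IsFresh u (n + 1) m → (word u m (n + 1)).reverse ≠ word u m (n + 1) →
    IsFresh u n (m + 1)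

lemma Rich.freshShifts (h : Rich u) (n : ℕ) : FreshShifts u n := by
  intro m hm hnp
  by_contra hnot
  obtain ⟨q, hq, hqe⟩ : ∃ q < m + 1, EqUpToReversal (word u q n) (word u (m + 1) n) := by
    simpa [IsFresh] using hnot
  obtain ⟨i, -, him, hi, hlast⟩ :=
    Nat.exists_last_lt (P := fun l => EqUpToReversal (word u l n) (word u (m + 1) n)) hq hqe
  have hd : i + (m + 1 - i) = m + 1 := by omega
  have hpal := reverse_word_eq_of_isRich (d := m + 1 - i) (by omega)
    (h _ (isFactor_word u i _)) (by rwa [hd]) fun o h1 h2 => by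
      rw [hd]; exact hlast (i + o) (by omega) (by omega)
  rcases eq_or_lt_of_le (show i ≤ m by omega) with rfl | hlt
  · exact hnp (by simpa using hpal)
  · have := word_add_eq_reverse_of_word_eq_reverse hpal.symm (o := 0) (k := n + 1) (by omega)
    rw [add_zero, show i + (n + (m + 1 - i) - 0 - (n + 1)) = m by omega] at this
    exact hm i hlt (Or.inr this)

lemma isFresh_add_of_forall_freshShifts (hF : ∀ n, FreshShifts u n) {s : List A}
    (hs : s.reverse = s) {n d p : ℕ} (hp : IsFresh u (n + d) p)
    (hnp : (word u p (n + d)).reverse ≠ word u p (n + d)) (hend : word u (p + d) n = s)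
    (hmid : ∀ o, 0 < o → o < d → word u (p + o) n ≠ s) : IsFresh u n (p + d) := by
  induction d generalizing p with
  | zero => exact hp
  | succ d ih =>
    have hp' : IsFresh u (n + d) (p + 1) := hF (n + d) p hp hnp
    rcases Nat.eq_zero_or_pos d with rfl | hd
    · exact hp'
    rw [show p + (d + 1) = p + 1 + d by omega] at hend ⊢
    refine ih hp' (fun hpal => ?_) hend fun o h1 h2 => ?_
    · have := word_add_eq_reverse_of_word_eq_reverse hpal.symm (o := 0) (k := n) (by omega)
      rw [add_zero, show p + 1 + (n + d - 0 - n) = p + 1 + d by omega, hend, hs] at this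
      exact hmid 1 (by omega) (by omega) this
    · rw [show p + 1 + o = p + (o + 1) by omega]
      exact hmid (o + 1) (by omega) (by omega)

lemma rich_of_forall_freshShifts (hF : ∀ n, FreshShifts u n) : Rich u := by
  by_contra hnr
  obtain ⟨s, i, d, hs, hret, hnp⟩ := exists_isCompleteReturn_of_not_rich hnr
  obtain ⟨p, hp, hpi⟩ := exists_isFresh (isFactor_word u i (s.length + d))
  rw [length_word] at hp hpi
  obtain ⟨hd, hstart, hend, hmid⟩ := hret.of_eqUpToReversal hs hpi
  have hpnp : (word u p (s.length + d)).reverse ≠ word u p (s.length + d) := by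
    rcases hpi with h | h <;> rw [h]
    · exact hnp
    · rw [List.reverse_reverse]; exact hnp ∘ Eq.symm
  exact isFresh_add_of_forall_freshShifts hF hs hp hpnp hend hmid p (by omega)
    (Or.inl (hstart.trans hend.symm))

lemma rich_iff_forall_freshShifts : Rich u ↔ ∀ n, FreshShifts u n :=
  ⟨Rich.freshShifts, rich_of_forall_freshShifts⟩

end FreshPositions

section Counting

variable {A : Type*} {u : ℕ → A}

lemma palComplexity_eq_ncard (n : ℕ) :
    palComplexity u n = {p | IsFresh u n p ∧ (word u p n).reverse = word u p n}.ncard := by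
  rw [palComplexity, ← ((injOn_word_isFresh n).mono fun p hp => hp.1).ncard_image]
  congr
  ext w
  constructor
  · rintro ⟨rfl, hw, hpal⟩
    obtain ⟨p, hp, hpw⟩ := exists_isFresh hw
    rw [eqUpToReversal_iff_of_reverse_eq hpal] at hpw
    exact ⟨p, ⟨hp, by rw [hpw, hpal]⟩, hpw⟩
  · rintro ⟨p, ⟨-, hpal⟩, rfl⟩
    exact ⟨length_word u p n, isFactor_word u p n, hpal⟩

variable [Finite A]

lemma finite_isFresh (u : ℕ → A) (n : ℕ) : {p | IsFresh u n p}.Finite :=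
  Set.Finite.of_finite_image
    ((List.finite_length_eq A n).subset (by rintro _ ⟨p, -, rfl⟩; exact length_word u p n))
    (injOn_word_isFresh n)

/-- Each reversal class of factors of length `n` has exactly one fresh position; it accounts
for two factors, or for one palindrome counted twice. -/
lemma complexity_add_palComplexity (hcur : ClosedUnderReversal u) (n : ℕ) :
    complexity u n + palComplexity u n = 2 * {p | IsFresh u n p}.ncard := by
  set F := {p | IsFresh u n p}
  have hunion : (word u · n) '' F ∪ (fun p => (word u p n).reverse) '' F =
      {w | w.length = n ∧ IsFactor u w} := by
    ext w
    constructor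
    · rintro (⟨p, -, rfl⟩ | ⟨p, -, rfl⟩)
      · exact ⟨length_word u p n, isFactor_word u p n⟩
      · exact ⟨by simp, hcur _ (isFactor_word u p n)⟩
    · rintro ⟨rfl, hw⟩
      obtain ⟨p, hp, hpw | hpw⟩ := exists_isFresh hw
      · exact Or.inl ⟨p, hp, hpw⟩
      · exact Or.inr ⟨p, hp, by simp only [hpw, List.reverse_reverse]⟩
  have hinter : (word u · n) '' F ∩ (fun p => (word u p n).reverse) '' F =
      {w | w.length = n ∧ IsFactor u w ∧ w.reverse = w} := by
    ext w
    constructor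
    · rintro ⟨⟨p, hp, rfl⟩, ⟨q, hq, hqp⟩⟩
      obtain rfl : q = p := hq.eq hp (Or.inr (List.reverse_eq_iff.mp hqp))
      exact ⟨length_word u q n, isFactor_word u q n, hqp⟩
    · rintro ⟨rfl, hw, hpal⟩
      obtain ⟨p, hp, hpw⟩ := exists_isFresh hw
      rw [eqUpToReversal_iff_of_reverse_eq hpal] at hpw
      exact ⟨⟨p, hp, hpw⟩, ⟨p, hp, by simp only [hpw, hpal]⟩⟩
  rw [complexity, palComplexity, ← hunion, ← hinter,
    Set.ncard_union_add_ncard_inter _ _ ((finite_isFresh u n).image _)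
      ((finite_isFresh u n).image _),
    (injOn_word_isFresh n).ncard_image, (injOn_reverse_word_isFresh n).ncard_image, two_mul]

lemma ncard_isFresh_eq_ncard_add_one (n : ℕ) :
    {p | IsFresh u n p}.ncard = {m | IsFresh u n (m + 1)}.ncard + 1 := by
  have hF : {p | IsFresh u n p} = insert 0 ((· + 1) '' {m | IsFresh u n (m + 1)}) := by
    ext p
    cases p <;> simp [isFresh_zero]
  rw [hF, Set.ncard_insert_of_notMem (by simp)
      ((finite_isFresh u n).subset (by rintro _ ⟨m, hm, rfl⟩; exact hm)),
    (add_left_injective 1).injOn.ncard_image]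

/-- The equation at `n` says that `m ↦ m - 1`, which always maps the nonzero fresh positions of
length `n` into the fresh non-palindromic positions of length `n + 1`, is onto. -/
lemma palComplexity_add_palComplexity_eq_iff (hcur : ClosedUnderReversal u) (n : ℕ) :
    (palComplexity u (n + 1) : ℤ) + palComplexity u n =
      (complexity u (n + 1) : ℤ) - complexity u n + 2 ↔ FreshShifts u n := by
  set G := {m | IsFresh u (n + 1) m ∧ (word u m (n + 1)).reverse ≠ word u m (n + 1)}
  set F' := {m | IsFresh u n (m + 1)}
  have hsub : F' ⊆ G := fun _ hm => IsFresh.of_add_one hm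
  have hGfin : G.Finite := (finite_isFresh u (n + 1)).subset fun _ h => h.1
  have hG : {p | IsFresh u (n + 1) p}.ncard = palComplexity u (n + 1) + G.ncard := by
    rw [palComplexity_eq_ncard]
    exact (Set.ncard_inter_add_ncard_sdiff_eq_ncard _ _ (finite_isFresh u (n + 1))).symm
  have h0 := complexity_add_palComplexity hcur n
  have h1 := complexity_add_palComplexity hcur (n + 1)
  have h2 : _ = F'.ncard + 1 := ncard_isFresh_eq_ncard_add_one (u := u) n
  have hcard : (palComplexity u (n + 1) : ℤ) + palComplexity u n =
      (complexity u (n + 1) : ℤ) - complexity u n + 2 ↔ G.ncard = F'.ncard := by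
    omega
  rw [hcard]
  constructor
  · intro h m hm hnp
    show m ∈ F'
    rw [Set.eq_of_subset_of_ncard_le hsub h.le hGfin]
    exact ⟨hm, hnp⟩
  · intro h
    exact congrArg Set.ncard (Set.Subset.antisymm (fun m hm => h m hm.1 hm.2) hsub)

end Counting

theorem stmt5_general {A : Type*} [Fintype A] (u : ℕ → A)
    (hcur : ClosedUnderReversal u) :
    Rich u ↔ ∀ n : ℕ, (palComplexity u (n + 1) : ℤ) + (palComplexity u n : ℤ) =
      (complexity u (n + 1) : ℤ) - (complexity u n : ℤ) + 2 := by
  rw [rich_iff_forall_freshShifts]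
  exact forall_congr' fun n => (palComplexity_add_palComplexity_eq_iff hcur n).symm

/-- If the language of `u` is closed under reversal, then `u` is
rich iff `P(n+1) + P(n) = C(n+1) − C(n) + 2` for all `n`. -/
theorem stmt5 {A : Type*} [Fintype A] (u : ℕ → A)
    (hall : AllLettersOccur u)
    (hcur : ClosedUnderReversal u) :
    Rich u ↔ ∀ n : ℕ, (palComplexity u (n + 1) : ℤ) + (palComplexity u n : ℤ) =
      (complexity u (n + 1) : ℤ) - (complexity u n : ℤ) + 2 :=
  stmt5_general u hcur
end

section
/- Let u be an infinite word over a finite alphabet whose language is closed under reversal, and let w be a palindromic bispecial factor of u. Then the bilateral order b(w) of w has a different parity than the number of palindromic extensions of w, i.e., b(w) + #Pext(w) is odd. -/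
open List

/-- Parity of a finset closed under an involution equals parity of its fixed
points. -/
lemma invol_parity {α : Type*} [DecidableEq α] (f : α → α) :
    ∀ s : Finset α, (∀ x ∈ s, f x ∈ s) → (∀ x ∈ s, f (f x) = x) →
      s.card % 2 = (s.filter (fun x => f x = x)).card % 2 := by
  intro s
  induction s using Finset.strongInduction with
  | _ s ih =>
    intro hcl hinv
    by_cases hfix : ∀ x ∈ s, f x = x
    · rw [Finset.filter_true_of_mem hfix]
    · push_neg at hfix
      obtain ⟨x, hx, hfx⟩ := hfix
      set s' := s \ {x, f x} with hs'
      have hfxs : f x ∈ s := hcl x hx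
      have hpairsub : ({x, f x} : Finset α) ⊆ s := by
        intro y hy
        simp only [Finset.mem_insert, Finset.mem_singleton] at hy
        rcases hy with rfl | rfl <;> assumption
      have hss : s' ⊆ s := Finset.sdiff_subset
      have hcard : s.card = s'.card + 2 := by
        have h2 : ({x, f x} : Finset α).card = 2 := by
          rw [Finset.card_insert_of_notMem (by simpa using (Ne.symm hfx)),
            Finset.card_singleton]
        have := Finset.card_sdiff_of_subset hpairsub
        rw [← hs'] at this
        have hle := Finset.card_le_card hpairsub
        omega
      have hssub : s' ⊂ s := by
        refine lt_of_le_of_ne hss ?_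
        intro h; rw [h] at hcard; omega
      have hcl' : ∀ y ∈ s', f y ∈ s' := by
        intro y hy
        simp only [hs', Finset.mem_sdiff, Finset.mem_insert,
          Finset.mem_singleton] at hy ⊢
        obtain ⟨hys, hy1⟩ := hy
        push_neg at hy1 ⊢
        refine ⟨hcl y hys, ?_, ?_⟩
        · intro h; apply hy1.2; rw [← hinv y hys, h]
        · intro h
          apply hy1.1
          have := hinv y hys
          rw [h, hinv x hx] at this
          exact this.symm
      have hinv' : ∀ y ∈ s', f (f y) = y := fun y hy => hinv y (hss hy)
      have hfilter : s.filter (fun y => f y = y) = s'.filter (fun y => f y = y) := by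
        ext y
        simp only [Finset.mem_filter, hs', Finset.mem_sdiff, Finset.mem_insert,
          Finset.mem_singleton]
        constructor
        · rintro ⟨hys, hfy⟩
          push_neg
          refine ⟨⟨hys, ?_, ?_⟩, hfy⟩
          · rintro rfl; exact hfx hfy
          · rintro rfl; apply hfx; rw [hinv x hx] at hfy; exact hfy.symm
        · rintro ⟨⟨hys, _⟩, hfy⟩; exact ⟨hys, hfy⟩
      rw [hfilter, hcard]
      have := ih s' hssub hcl' hinv'
      omega

/-- If the language of `u` is closed under reversal and `w` is a
palindromic bispecial factor, then `b(w) + #Pext(w)` is odd. -/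
theorem stmt7 {A : Type*} [Fintype A] (u : ℕ → A)
    (hall : AllLettersOccur u)
    (hcur : ClosedUnderReversal u)
    (w : List A) (hw : IsFactor u w) (hpal : w.reverse = w)
    (hbs : Bispecial u w) :
    Odd (bilateralOrder u w + (Set.ncard (Pext u w) : ℤ)) := by
  classical
  -- reversing a bilateral extension
  have hrev : ∀ a b : A, (a, b) ∈ Bext u w → (b, a) ∈ Bext u w := by
    intro a b hab
    have := hcur _ hab
    simp only [List.reverse_cons, List.reverse_append, List.reverse_singleton,
      hpal] at this
    simpa [Bext, IsFactor] using this
  -- Lext = Rext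
  have hLR : Lext u w = Rext u w := by
    ext a
    constructor
    · intro ha
      have := hcur _ ha
      simp only [List.reverse_cons, hpal] at this
      exact this
    · intro ha
      have := hcur _ ha
      simp only [List.reverse_append, List.reverse_singleton, hpal] at this
      simpa [Lext, IsFactor] using this
  -- Pext has the same cardinality as the diagonal of Bext
  have hPimg : Pext u w = (fun a : A => a :: (w ++ [a])) ''
      {a : A | (a, a) ∈ Bext u w} := by
    ext v
    simp only [Pext, Set.mem_image, Set.mem_setOf_eq, Bext]
    constructor
    · rintro ⟨a, rfl, hf⟩; exact ⟨a, hf, rfl⟩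
    · rintro ⟨a, hf, rfl⟩; exact ⟨a, rfl, hf⟩
  have hinj : Function.Injective (fun a : A => a :: (w ++ [a])) := by
    intro a b h
    simpa using congrArg List.head? h
  have hP : Set.ncard (Pext u w) = Set.ncard {a : A | (a, a) ∈ Bext u w} := by
    rw [hPimg, Set.ncard_image_of_injective _ hinj]
  -- parity of Bext via the swap involution
  set sB : Finset (A × A) := (Bext u w).toFinset with hsB
  have hBcard : Set.ncard (Bext u w) = sB.card := Set.ncard_eq_toFinset_card' _
  have hpar := invol_parity (Prod.swap : A × A → A × A) sB
    (by intro p hp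
        simp only [hsB, Set.mem_toFinset] at hp ⊢
        exact hrev p.1 p.2 hp)
    (by intro p _; simp)
  have hfilt : (sB.filter (fun p => Prod.swap p = p)).card =
      Set.ncard {a : A | (a, a) ∈ Bext u w} := by
    rw [Set.ncard_eq_toFinset_card']
    apply Finset.card_bij (fun p _ => p.1)
    · rintro ⟨a, b⟩ hp
      simp only [Finset.mem_filter, hsB, Set.mem_toFinset, Prod.swap_prod_mk,
        Prod.mk.injEq] at hp
      obtain ⟨hp1, hb, -⟩ := hp
      subst hb
      simpa using hp1
    · rintro ⟨a, b⟩ hp ⟨c, d⟩ hq h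
      simp only [Finset.mem_filter, Prod.swap_prod_mk, Prod.mk.injEq] at hp hq
      obtain ⟨-, hb, -⟩ := hp
      obtain ⟨-, hd, -⟩ := hq
      simp only at h
      subst hb; subst hd; subst h; rfl
    · intro a ha
      simp only [Set.mem_toFinset, Set.mem_setOf_eq] at ha
      exact ⟨(a, a), by simp [Finset.mem_filter, hsB, Set.mem_toFinset, ha], rfl⟩
  -- put it together
  have hparity : Set.ncard (Bext u w) % 2 = Set.ncard (Pext u w) % 2 := by
    rw [hBcard, hP, ← hfilt]; exact hpar
  have heven : Even ((Set.ncard (Bext u w) : ℤ) + Set.ncard (Pext u w)) := by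
    rcases Nat.even_or_odd (Set.ncard (Bext u w)) with h | h
    · have h' : Even (Set.ncard (Pext u w)) := by
        rcases h with ⟨k, hk⟩
        refine Nat.even_iff.mpr ?_
        rw [← hparity, hk]; omega
      rcases h with ⟨k, hk⟩; rcases h' with ⟨m, hm⟩
      exact ⟨k + m, by push_cast [hk, hm]; ring⟩
    · have h' : Odd (Set.ncard (Pext u w)) := by
        rcases h with ⟨k, hk⟩
        refine Nat.odd_iff.mpr ?_
        rw [← hparity, hk]; omega
      rcases h with ⟨k, hk⟩; rcases h' with ⟨m, hm⟩
      exact ⟨k + m + 1, by push_cast [hk, hm]; ring⟩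
  unfold bilateralOrder
  rw [hLR]
  obtain ⟨k, hk⟩ := heven
  refine ⟨k - Set.ncard (Rext u w), ?_⟩
  omega
end
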